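/- arXiv:2512.18335 — 2 statements merged into one kernel-verified Lean document; each statement's English description precedes it below -/
import Mathlib

section
/- Let X be a finite subset of α with n = |X| ≥ 1 and let x⁺ ∈ α with x⁺ ∉ X. Set X' = X ∪ {x⁺}. Then |L(X) \ L(X')| ≤ 1, |R(X) \ R(X')| ≤ 1, |L(X') \ L(X)| ≤ 1, and |R(X') \ R(X)| ≤ 1. -/
open Finset

/-- Median index `I(n) = ⌈n/2⌉`. -/
def medianIdx (n : ℕ) : ℕ := (n + 1) / 2

/-- 1-indexed rank of `x` in `X`: the number of elements of `X` that are `≤ x`.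
For `x ∈ X`, `rank X x = i` means `x` is the `i`-th smallest element of `X`. -/
def rank {α : Type*} [LinearOrder α] (X : Finset α) (x : α) : ℕ :=
  (X.filter (fun y => y ≤ x)).card

/-- Left part of the median partition: elements of rank `< I(|X|)`. -/
def medL {α : Type*} [LinearOrder α] (X : Finset α) : Finset α :=
  X.filter (fun x => rank X x < medianIdx X.card)

/-- Right part of the median partition: elements of rank `≥ I(|X|)`. -/
def medR {α : Type*} [LinearOrder α] (X : Finset α) : Finset α :=
  X.filter (fun x => medianIdx X.card ≤ rank X x)

lemma rank_lt_rank {α : Type*} [LinearOrder α] {X : Finset α} {a b : α}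
    (hb : b ∈ X) (hab : a < b) : rank X a < rank X b := by
  apply Finset.card_lt_card
  constructor
  · intro y hy
    simp only [Finset.mem_filter] at *
    exact ⟨hy.1, hy.2.trans hab.le⟩
  · intro h
    have := h (Finset.mem_filter.mpr ⟨hb, le_refl b⟩)
    simp only [Finset.mem_filter] at this
    exact absurd this.2 (not_le.mpr hab)

lemma rank_inj {α : Type*} [LinearOrder α] {X : Finset α} {a b : α}
    (ha : a ∈ X) (hb : b ∈ X) (h : rank X a = rank X b) : a = b := by
  rcases lt_trichotomy a b with hlt | heq | hgt
  · exact absurd h (rank_lt_rank hb hlt).ne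
  · exact heq
  · exact absurd h.symm (rank_lt_rank ha hgt).ne

lemma rank_union_singleton {α : Type*} [LinearOrder α] {X : Finset α} {xp : α}
    (hxp : xp ∉ X) (x : α) :
    rank (X ∪ {xp}) x = rank X x + (if xp ≤ x then 1 else 0) := by
  have : X ∪ {xp} = insert xp X := by
    ext y; simp [or_comm]
  rw [this]
  unfold rank
  rw [Finset.filter_insert]
  split_ifs with h
  · rw [Finset.card_insert_of_notMem (by simp [hxp])]
  · simp

theorem median_partition_stability_insert {α : Type*} [LinearOrder α]
    (X : Finset α) (hn : 1 ≤ X.card)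
    (xp : α) (hxp : xp ∉ X)
    (X' : Finset α) (hX' : X' = X ∪ {xp}) :
    (medL X \ medL X').card ≤ 1 ∧ (medR X \ medR X').card ≤ 1 ∧
    (medL X' \ medL X).card ≤ 1 ∧ (medR X' \ medR X).card ≤ 1 := by
  subst hX'
  set X' := X ∪ {xp} with hX'
  have hcard : X'.card = X.card + 1 := by
    have : X' = insert xp X := by ext y; simp [hX', or_comm]
    rw [this, Finset.card_insert_of_notMem hxp]
  set n := X.card with hn'
  set i := medianIdx n with hi
  set i' := medianIdx (n + 1) with hi'
  have hii' : i ≤ i' ∧ i' ≤ i + 1 ∧ 1 ≤ i := by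
    simp only [hi, hi', medianIdx]
    omega
  have hr : ∀ x, rank X' x = rank X x + (if xp ≤ x then 1 else 0) :=
    rank_union_singleton hxp
  have hmemX' : ∀ x ∈ X, x ∈ X' := fun x hx => by simp [hX', hx]
  have hxpX' : xp ∈ X' := by simp [hX']
  -- mixed-case helpers
  refine ⟨?_, ?_, ?_, ?_⟩
  · -- medL X \ medL X'
    apply Finset.card_le_one.mpr
    intro a ha b hb
    simp only [Finset.mem_sdiff, medL, Finset.mem_filter, hcard, not_and] at ha hb
    obtain ⟨⟨haX, hra⟩, ha2⟩ := ha
    obtain ⟨⟨hbX, hrb⟩, hb2⟩ := hb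
    have ha3 := not_lt.mp (ha2 (hmemX' a haX))
    have hb3 := not_lt.mp (hb2 (hmemX' b hbX))
    rw [← hi] at hra hrb
    rw [← hi'] at ha3 hb3
    have h1 := hr a; have h2 := hr b
    apply rank_inj haX hbX
    split_ifs at h1 h2 <;> omega
  · -- medR X \ medR X'
    apply Finset.card_le_one.mpr
    intro a ha b hb
    simp only [Finset.mem_sdiff, medR, Finset.mem_filter, hcard, not_and] at ha hb
    obtain ⟨⟨haX, hra⟩, ha2⟩ := ha
    obtain ⟨⟨hbX, hrb⟩, hb2⟩ := hb
    have ha3 := not_le.mp (ha2 (hmemX' a haX))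
    have hb3 := not_le.mp (hb2 (hmemX' b hbX))
    rw [← hi] at hra hrb
    rw [← hi'] at ha3 hb3
    have h1 := hr a; have h2 := hr b
    apply rank_inj haX hbX
    split_ifs at h1 h2 <;> omega
  · -- medL X' \ medL X
    apply Finset.card_le_one.mpr
    intro a ha b hb
    simp only [Finset.mem_sdiff, medL, Finset.mem_filter, hcard, not_and] at ha hb
    obtain ⟨⟨haX', hra⟩, ha2⟩ := ha
    obtain ⟨⟨hbX', hrb⟩, hb2⟩ := hb
    have hmem : ∀ c ∈ X', c = xp ∨ c ∈ X := fun c hc => by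
      simp only [hX', Finset.mem_union, Finset.mem_singleton] at hc; tauto
    -- for c ∈ X in the diff: rank X c = i, i' = i+1, c < xp, rank X' c = i
    have key : ∀ c ∈ X, rank X' c < i' → ¬ rank X c < i →
        rank X c = i ∧ i' = i + 1 ∧ c < xp ∧ rank X' c = i := by
      intro c hcX hc1 hc2
      have h1 := hr c
      have h2 := not_lt.mp hc2
      split_ifs at h1 with hle
      · omega
      · exact ⟨by omega, by omega, lt_of_not_ge hle, by omega⟩
    rcases hmem a haX' with haxp | haX <;> rcases hmem b hbX' with hbxp | hbX
    · rw [haxp, hbxp]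
    · -- a = xp, b ∈ X : contradiction
      obtain ⟨_, hi1, hblt, hb4⟩ := key b hbX hrb (fun h => hb2 hbX h)
      have := rank_lt_rank (X := X') hxpX' hblt
      rw [haxp] at hra
      omega
    · obtain ⟨_, hi1, halt, ha4⟩ := key a haX hra (fun h => ha2 haX h)
      have := rank_lt_rank (X := X') hxpX' halt
      rw [hbxp] at hrb
      omega
    · obtain ⟨ha4, _, _, _⟩ := key a haX hra (fun h => ha2 haX h)
      obtain ⟨hb4, _, _, _⟩ := key b hbX hrb (fun h => hb2 hbX h)
      exact rank_inj haX hbX (by omega)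
  · -- medR X' \ medR X
    apply Finset.card_le_one.mpr
    intro a ha b hb
    simp only [Finset.mem_sdiff, medR, Finset.mem_filter, hcard, not_and] at ha hb
    obtain ⟨⟨haX', hra⟩, ha2⟩ := ha
    obtain ⟨⟨hbX', hrb⟩, hb2⟩ := hb
    have hmem : ∀ c ∈ X', c = xp ∨ c ∈ X := fun c hc => by
      simp only [hX', Finset.mem_union, Finset.mem_singleton] at hc; tauto
    have key : ∀ c ∈ X, i' ≤ rank X' c → ¬ i ≤ rank X c →
        rank X c + 1 = i ∧ i' = i ∧ xp < c ∧ rank X' c = i := by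
      intro c hcX hc1 hc2
      have h1 := hr c
      have h2 := not_le.mp hc2
      split_ifs at h1 with hle
      · refine ⟨by omega, by omega, lt_of_le_of_ne hle ?_, by omega⟩
        rintro rfl; exact hxp hcX
      · omega
    rcases hmem a haX' with haxp | haX <;> rcases hmem b hbX' with hbxp | hbX
    · rw [haxp, hbxp]
    · obtain ⟨_, hi1, hblt, hb4⟩ := key b hbX hrb (fun h => hb2 hbX h)
      have := rank_lt_rank (X := X') (hmemX' b hbX) hblt
      rw [haxp] at hra
      omega
    · obtain ⟨_, hi1, halt, ha4⟩ := key a haX hra (fun h => ha2 haX h)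
      have := rank_lt_rank (X := X') (hmemX' a haX) halt
      rw [hbxp] at hrb
      omega
    · obtain ⟨ha4, _, _, _⟩ := key a haX hra (fun h => ha2 haX h)
      obtain ⟨hb4, _, _, _⟩ := key b hbX hrb (fun h => hb2 hbX h)
      exact rank_inj haX hbX (by omega)
end

section
/- Let X be a finite subset of α with n = |X| even and n ≥ 2 (so that I(n+1) = I(n) + 1), write I = I(n), and let x⁺ ∈ α with x⁺ ∉ X and x⁺ > x_(I). Set X' = X ∪ {x⁺}. Then L(X') = L(X) ∪ {x_(I)} and R(X') = ({x⁺} ∪ R(X)) \ {x_(I)}. -/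
open Finset

lemma rank_le_rank {α : Type*} [LinearOrder α] (X : Finset α) {x y : α} (h : x ≤ y) :
    rank X x ≤ rank X y := by
  apply card_le_card
  intro z hz
  simp only [mem_filter] at *
  exact ⟨hz.1, le_trans hz.2 h⟩

lemma rank_lt_rank_s5 {α : Type*} [LinearOrder α] (X : Finset α) {x y : α}
    (hy : y ∈ X) (h : x < y) : rank X x < rank X y := by
  apply card_lt_card
  constructor
  · intro z hz
    simp only [mem_filter] at *
    exact ⟨hz.1, le_trans hz.2 h.le⟩
  · intro hsub
    have := hsub (by simp [mem_filter, hy] : y ∈ X.filter (fun z => z ≤ y))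
    simp only [mem_filter] at this
    exact absurd this.2 (not_le.mpr h)

lemma eq_of_rank_eq {α : Type*} [LinearOrder α] (X : Finset α) {x y : α}
    (hx : x ∈ X) (hy : y ∈ X) (h : rank X x = rank X y) : x = y := by
  rcases lt_trichotomy x y with hl | he | hg
  · exact absurd h (rank_lt_rank_s5 X hy hl).ne
  · exact he
  · exact absurd h.symm (rank_lt_rank_s5 X hx hg).ne

lemma rank_insert {α : Type*} [LinearOrder α] (X : Finset α) {xp : α} (hxp : xp ∉ X) (y : α) :
    rank (insert xp X) y = rank X y + if xp ≤ y then 1 else 0 := by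
  unfold rank
  rw [filter_insert]
  split
  · rw [card_insert_of_notMem (by simp [hxp])]
  · simp

theorem median_insert_even_above {α : Type*} [LinearOrder α]
    (X : Finset α) (hn2 : 2 ≤ X.card) (heven : Even X.card)
    (xI : α) (hxI : xI ∈ X) (hrank : rank X xI = medianIdx X.card)
    (xp : α) (hxp : xp ∉ X) (hgt : xI < xp)
    (X' : Finset α) (hX' : X' = X ∪ {xp}) :
    medL X' = medL X ∪ {xI} ∧ medR X' = (insert xp (medR X)) \ {xI} := by
  have hX'i : X' = insert xp X := by rw [hX']; ext z; simp [or_comm]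
  subst hX'i
  have hcard : (insert xp X).card = X.card + 1 := card_insert_of_notMem hxp
  obtain ⟨k, hk⟩ := heven
  set I := medianIdx X.card with hI
  have hIk : I = k := by simp [hI, medianIdx, hk]; omega
  have hI' : medianIdx (X.card + 1) = I + 1 := by
    simp only [medianIdx, hk, hIk]; omega
  -- key pointwise facts
  have key : ∀ y, (y ∈ medL (insert xp X) ↔ y ∈ medL X ∨ y = xI) ∧
      (y ∈ medR (insert xp X) ↔ (y = xp ∨ y ∈ medR X) ∧ y ≠ xI) := by
    intro y
    simp only [medL, medR, mem_filter, mem_insert, hI', hcard, rank_insert X hxp, ← hI]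
    by_cases hy : y = xp
    · subst y
      simp only [le_refl, if_true, hI']
      have h1 : I ≤ rank X xp := hrank ▸ rank_le_rank X hgt.le
      constructor
      · simp only [true_or, true_and]
        constructor
        · intro h; omega
        · rintro (⟨hmem, _⟩ | rfl)
          · exact absurd hmem hxp
          · exact absurd hgt (lt_irrefl _)
      · constructor
        · intro _
          exact ⟨Or.inl trivial, fun h => absurd (h ▸ hgt) (lt_irrefl _)⟩
        · rintro ⟨_, _⟩
          exact ⟨Or.inl trivial, by omega⟩
    · by_cases hyX : y ∈ X
      · have hne : (y = xp ∨ y ∈ X) := Or.inr hyX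
        by_cases hle : xp ≤ y
        · -- then xI < y, so rank X y > I
          have : I < rank X y := hrank ▸ rank_lt_rank_s5 X hyX (lt_of_lt_of_le hgt hle)
          have hyne : y ≠ xI := fun h => by subst h; exact absurd hle (not_le.mpr hgt)
          simp only [if_pos hle]
          constructor
          · constructor
            · intro h; omega
            · rintro (⟨_, h⟩ | rfl)
              · omega
              · exact absurd rfl hyne
          · constructor
            · intro _; exact ⟨Or.inr ⟨hyX, by omega⟩, hyne⟩
            · intro _; exact ⟨hne, by omega⟩
        · simp only [if_neg hle, add_zero]
          have hrle : rank X y = I → y = xI :=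
            fun h => eq_of_rank_eq X hyX hxI (h.trans hrank.symm)
          have hrxI : y = xI → rank X y = I := fun h => h ▸ hrank
          constructor
          · constructor
            · rintro ⟨_, h⟩
              rcases lt_or_eq_of_le (Nat.lt_succ_iff.mp h) with h' | h'
              · exact Or.inl ⟨hyX, h'⟩
              · exact Or.inr (hrle h')
            · rintro (⟨_, h⟩ | rfl)
              · exact ⟨hne, by omega⟩
              · exact ⟨hne, by omega⟩
          · constructor
            · rintro ⟨_, h⟩
              refine ⟨Or.inr ⟨hyX, by omega⟩, fun he => ?_⟩
              have := hrxI he; omega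
            · rintro ⟨h1, h2⟩
              rcases h1 with rfl | ⟨_, h1⟩
              · exact absurd rfl hy
              · refine ⟨hne, ?_⟩
                rcases lt_or_eq_of_le h1 with h' | h'
                · omega
                · exact absurd (hrle h'.symm) h2
      · -- y ∉ X, y ≠ xp: both sides false
        have h1 : ¬(y = xp ∨ y ∈ X) := by tauto
        have hyne : y ≠ xI := fun h => hyX (h ▸ hxI)
        constructor
        · constructor
          · rintro ⟨h, _⟩; exact absurd h h1
          · rintro (⟨h, _⟩ | rfl)
            · exact absurd h hyX
            · exact absurd rfl hyne
        · constructor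
          · rintro ⟨h, _⟩; exact absurd h h1
          · rintro ⟨h, _⟩
            rcases h with rfl | ⟨h, _⟩
            · exact absurd rfl hy
            · exact absurd h hyX
  constructor
  · ext y
    rw [mem_union, mem_singleton, (key y).1]
  · ext y
    rw [mem_sdiff, mem_insert, mem_singleton, (key y).2]
end
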